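/- Let K be an H-graded field, A₁ a valuation ring of the field K₁, R a graded valuation ring of a graded subfield L of K with K = K₁·L (componentwise: K_h = K₁ · L_h for all h), R₁ = R ∩ L₁ ⊆ A₁ a local inclusion, and N a positive integer such that every homogeneous x ∈ K of degree h satisfies x^N ∈ A₁^× · L_{h^N}. Then the set A = {x ∈ K : every homogeneous component y of x of degree h satisfies y^N ∈ A₁^× · R_{h^N}} is closed under addition within each graded component: if x, y ∈ A ∩ K_h are nonzero with x + y ≠ 0 and x/y ∈ A₁, then x + y ∈ A ∩ K_h. -/

import Mathlib

open scoped DirectSum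

/-- An `H`-graded field: a nonzero commutative ring with an internal grading by the
commutative group `H` in which every nonzero homogeneous element is invertible
(with homogeneous inverse). -/
structure GradedField (H : Type*) [CommGroup H] [DecidableEq H] (K : Type*) [CommRing K] where
  comp : H → AddSubgroup K
  one_mem : (1 : K) ∈ comp 1
  mul_mem : ∀ {g h : H} {x y : K}, x ∈ comp g → y ∈ comp h → x * y ∈ comp (g * h)
  isInternal : DirectSum.IsInternal fun h : H => comp h
  zero_ne_one : (0 : K) ≠ 1
  inv_mem : ∀ {h : H} {x : K}, x ∈ comp h → x ≠ 0 → ∃ y ∈ comp h⁻¹, x * y = 1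

namespace GradedField

variable {H : Type*} [CommGroup H] [DecidableEq H] {K : Type*} [CommRing K] (F : GradedField H K)

/-- A homogeneous element. -/
def Homogeneous (x : K) : Prop := ∃ h, x ∈ F.comp h

/-- A subring is graded if each of its elements is a sum of homogeneous elements of the
subring. -/
def IsGradedSubring (R : Subring K) : Prop :=
  ∀ x ∈ R, x ∈ AddSubgroup.closure {y : K | y ∈ R ∧ F.Homogeneous y}

/-- A graded subfield: a graded subring closed under inverses of nonzero homogeneous
elements. -/
structure IsGradedSubfield (L : Subring K) : Prop where
  graded : F.IsGradedSubring L
  inv_mem : ∀ x ∈ L, F.Homogeneous x → x ≠ 0 → Ring.inverse x ∈ L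

/-- A graded valuation ring of the graded subfield `L`: a graded subring `R ⊆ L` such that
every nonzero homogeneous element of `L` lies in `R` or has its inverse in `R`. -/
def IsGradedValRing (L R : Subring K) : Prop :=
  R ≤ L ∧ F.IsGradedSubring R ∧
    ∀ x ∈ L, F.Homogeneous x → x ≠ 0 → (x ∈ R ∨ Ring.inverse x ∈ R)

/-- The identity component `K₁`, as a subring. -/
def oneComponent : Subring K where
  carrier := F.comp 1
  one_mem' := F.one_mem
  mul_mem' := fun ha hb => by simpa using F.mul_mem ha hb
  add_mem' := fun ha hb => (F.comp 1).add_mem ha hb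
  zero_mem' := (F.comp 1).zero_mem
  neg_mem' := fun ha => (F.comp 1).neg_mem ha

theorem mem_oneComponent {x : K} : x ∈ F.oneComponent ↔ x ∈ F.comp 1 := Iff.rfl

/-- The value group `ρ(L^×) ⊆ H` of a graded subfield `L`. -/
def valueGroup (L : Subring K)
    (hL : ∀ x ∈ L, F.Homogeneous x → x ≠ 0 → Ring.inverse x ∈ L) : Subgroup H where
  carrier := {h | ∃ x ∈ F.comp h, x ≠ 0 ∧ x ∈ L}
  one_mem' := ⟨1, F.one_mem, Ne.symm F.zero_ne_one, L.one_mem⟩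
  mul_mem' := by
    rintro g h ⟨x, hx, hx0, hxL⟩ ⟨y, hy, hy0, hyL⟩
    obtain ⟨x', hx', hxx'⟩ := F.inv_mem hx hx0
    obtain ⟨y', hy', hyy'⟩ := F.inv_mem hy hy0
    refine ⟨x * y, F.mul_mem hx hy, ?_, L.mul_mem hxL hyL⟩
    intro h0
    have h1 : x * y * (x' * y') = 1 := by rw [mul_mul_mul_comm, hxx', hyy', one_mul]
    rw [h0, zero_mul] at h1
    exact F.zero_ne_one h1
  inv_mem' := by
    rintro g ⟨x, hx, hx0, hxL⟩
    obtain ⟨y, hy, hxy⟩ := F.inv_mem hx hx0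
    have hu : IsUnit x := IsUnit.of_mul_eq_one y hxy
    have hyx : Ring.inverse x = y := by
      calc Ring.inverse x = Ring.inverse x * (x * y) := by rw [hxy, mul_one]
        _ = Ring.inverse x * x * y := by ring
        _ = y := by rw [Ring.inverse_mul_cancel x hu, one_mul]
    refine ⟨y, hy, ?_, ?_⟩
    · intro h0; rw [h0, mul_zero] at hxy; exact F.zero_ne_one hxy
    · rw [← hyx]; exact hL x hxL ⟨g, hx⟩ hx0

/-- The value group `ρ(K^×)` of the whole graded field. -/
def fullValueGroup : Subgroup H :=
  F.valueGroup ⊤ (fun _ _ _ _ => Subring.mem_top _)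

/-- `K₁` as a module over `L₁ = K₁ ∩ L`. -/
def oneSubmodule (L : Subring K) : Submodule ↥(F.oneComponent ⊓ L) K where
  carrier := F.comp 1
  add_mem' := fun ha hb => (F.comp 1).add_mem ha hb
  zero_mem' := (F.comp 1).zero_mem
  smul_mem' := fun c x hx => by
    have hc : (c : K) ∈ F.comp 1 := ((Subring.mem_inf).mp c.2).1
    have := F.mul_mem hc hx
    rw [one_mul] at this
    exact this

/-- A graded automorphism: a ring automorphism preserving each graded component. -/
def IsGradedAut (σ : RingAut K) : Prop := ∀ (h : H) (x : K), x ∈ F.comp h → σ x ∈ F.comp h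

end GradedField

/-- The fixed subring `K^G` of a group of ring automorphisms. -/
def fixedSubring {K : Type*} [CommRing K] (G : Subgroup (RingAut K)) : Subring K where
  carrier := {x | ∀ σ ∈ G, σ x = x}
  one_mem' := fun σ _ => map_one σ
  mul_mem' := fun ha hb σ hσ => by rw [map_mul, ha σ hσ, hb σ hσ]
  add_mem' := fun ha hb σ hσ => by rw [map_add, ha σ hσ, hb σ hσ]
  zero_mem' := fun σ _ => map_zero σ
  neg_mem' := fun ha σ hσ => by rw [map_neg, ha σ hσ]

theorem mem_fixedSubring {K : Type*} [CommRing K] {G : Subgroup (RingAut K)} {x : K} :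
    x ∈ fixedSubring G ↔ ∀ σ ∈ G, σ x = x := Iff.rfl


namespace GradedField

variable {H : Type*} [CommGroup H] [DecidableEq H] {K : Type*} [CommRing K]
variable (F : GradedField H K)

/-- Decomposition of an element into its homogeneous components. -/
noncomputable def decompose (x : K) : ⨁ h : H, ↥(F.comp h) :=
  (Equiv.ofBijective _ F.isInternal).symm x

/-- The degree-`h` homogeneous component of `x`. -/
noncomputable def component (h : H) (x : K) : K := (F.decompose x h : K)

/-- The inertia subgroup of `G`: graded automorphisms in `G` acting trivially on `K₁`. -/
def inertia (G : Subgroup (RingAut K)) : Subgroup (RingAut K) where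
  carrier := {σ | σ ∈ G ∧ ∀ x ∈ F.comp 1, σ x = x}
  one_mem' := ⟨G.one_mem, fun _ _ => rfl⟩
  mul_mem' := fun {a b} ha hb => ⟨G.mul_mem ha.1 hb.1, fun x hx => by
    show a (b x) = x
    rw [hb.2 x hx, ha.2 x hx]⟩
  inv_mem' := fun {a} ha => ⟨G.inv_mem ha.1, fun x hx => by
    conv_lhs => rw [← ha.2 x hx]
    exact a.symm_apply_apply x⟩

theorem mem_inertia {G : Subgroup (RingAut K)} {σ : RingAut K} :
    σ ∈ F.inertia G ↔ σ ∈ G ∧ ∀ x ∈ F.comp 1, σ x = x := Iff.rfl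

end GradedField

/-- A subring `S` containing a subring `L`, viewed as an `L`-submodule of the ambient ring. -/
def Subring.toSubmoduleOver {K : Type*} [CommRing K] (L S : Subring K) (hLS : L ≤ S) :
    Submodule ↥L K where
  carrier := S
  add_mem' := fun ha hb => S.add_mem ha hb
  zero_mem' := S.zero_mem
  smul_mem' := fun c x hx => S.mul_mem (hLS c.2) hx

section ZR

variable {H : Type*} [CommGroup H] [DecidableEq H] {K : Type*} [CommRing K]

/-- The Zariski–Riemann space of graded valuation rings of `K` containing `k₀`. -/
def GradedField.ZR (F : GradedField H K) (k₀ : Subring K) : Type _ :=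
  {O : Subring K // F.IsGradedValRing ⊤ O ∧ k₀ ≤ O}

/-- The set of homogeneous units (nonzero homogeneous elements) of `K`. -/
def GradedField.HomogUnits (F : GradedField H K) : Type _ :=
  {x : K // x ≠ 0 ∧ F.Homogeneous x}

open Classical in
/-- The embedding of the Zariski–Riemann space into `{0,1}^{K^×}` via characteristic
functions. -/
noncomputable def GradedField.chi (F : GradedField H K) (k₀ : Subring K) (O : F.ZR k₀) :
    F.HomogUnits → Bool :=
  fun x => decide (x.1 ∈ O.1)

/-- Basic open sets `P{F}∖{G}` of the constructible topology, for finite sets `F`, `G` of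
homogeneous units. -/
def GradedField.constructibleBasis (F : GradedField H K) (k₀ : Subring K) :
    Set (Set (F.ZR k₀)) :=
  {s | ∃ Fs Gs : Finset K, (∀ a ∈ Fs, a ≠ 0 ∧ F.Homogeneous a) ∧
    (∀ b ∈ Gs, b ≠ 0 ∧ F.Homogeneous b) ∧
    s = {O : F.ZR k₀ | (∀ a ∈ Fs, a ∈ O.1) ∧ ∀ b ∈ Gs, b ∉ O.1}}

/-- The constructible topology on the Zariski–Riemann space. -/
def GradedField.constructibleTop (F : GradedField H K) (k₀ : Subring K) :
    TopologicalSpace (F.ZR k₀) :=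
  TopologicalSpace.generateFrom (F.constructibleBasis k₀)

theorem GradedField.isUnit_of_mem_comp (F : GradedField H K) {h : H} {x : K}
    (hx : x ∈ F.comp h) (hx0 : x ≠ 0) : IsUnit x :=
  let ⟨_, _, hxy⟩ := F.inv_mem hx hx0
  IsUnit.of_mul_eq_one _ hxy

theorem GradedField.exists_unit_mul_of_oneComponent_mul (F : GradedField H K)
    {B R : Subring K} {g : H} {a b : K}
    (ha : ∃ u ∈ B, (∃ v ∈ B, u * v = 1) ∧ ∃ t ∈ R ⊓ F.oneComponent, a = u * t)
    (hb : ∃ u ∈ B, (∃ v ∈ B, u * v = 1) ∧ ∃ r ∈ R, r ∈ F.comp g ∧ b = u * r) :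
    ∃ u ∈ B, (∃ v ∈ B, u * v = 1) ∧ ∃ r ∈ R, r ∈ F.comp g ∧ a * b = u * r := by
  obtain ⟨u, huB, ⟨v, hvB, huv⟩, t, ⟨htR, htK⟩, rfl⟩ := ha
  obtain ⟨u', hu'B, ⟨v', hv'B, hu'v'⟩, r, hrR, hrg, rfl⟩ := hb
  refine ⟨u * u', B.mul_mem huB hu'B, ⟨v * v', B.mul_mem hvB hv'B, ?_⟩,
    t * r, R.mul_mem htR hrR, ?_, by ring⟩
  · rw [mul_mul_mul_comm, huv, hu'v', one_mul]
  · simpa only [one_mul] using F.mul_mem htK hrg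

theorem GradedField.good_set_add_closed_general {H : Type*} [CommGroup H] [DecidableEq H]
    {K : Type*} [CommRing K] (F : GradedField H K) (R : Subring K)
    (B : Subring K)
    (N : ℕ)
    -- classical ramification bound: `z^N ∈ B^× · R₁` for nonzero `z ∈ B`
    (hram : ∀ z ∈ B, z ≠ 0 → ∃ u ∈ B, (∃ v ∈ B, u * v = 1) ∧
      ∃ t ∈ R ⊓ F.oneComponent, z ^ N = u * t)
    (h : H) (x y : K) (hy : y ∈ F.comp h) (hy0 : y ≠ 0)
    (hxy0 : x + y ≠ 0)
    -- `x/y ∈ B`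
    (hdiv : x * Ring.inverse y ∈ B)
    -- `x` and `y` lie in the good set
    (hyA : ∃ u ∈ B, (∃ v ∈ B, u * v = 1) ∧ ∃ r ∈ R, r ∈ F.comp (h ^ N) ∧ y ^ N = u * r) :
    ∃ u ∈ B, (∃ v ∈ B, u * v = 1) ∧ ∃ r ∈ R, r ∈ F.comp (h ^ N) ∧
      (x + y) ^ N = u * r := by
  have hyu : IsUnit y := F.isUnit_of_mem_comp hy hy0
  set z := x * Ring.inverse y + 1
  have hzy : z * y = x + y := by rw [add_mul, one_mul, Ring.inverse_mul_cancel_right _ _ hyu]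
  have hz0 : z ≠ 0 := left_ne_zero_of_mul (hzy ▸ hxy0)
  rw [← hzy, mul_pow]
  exact F.exists_unit_mul_of_oneComponent_mul (hram z (B.add_mem hdiv B.one_mem) hz0) hyA

/-- Within a fixed graded component, the set
`A ∩ K_h = {y ∈ K_h : y^N ∈ B^× · R_{h^N}}` is closed under addition: if `x, y ∈ K_h` are
nonzero elements of this set with `x + y ≠ 0` and `x/y ∈ B`, then `x + y` also lies in it.
Here `B` is a valuation ring of `K₁` containing `R₁ = R ∩ K₁` locally, `K_h = K₁ · L_h`
componentwise, and `N` is such that the `N`-th power of any homogeneous element of degree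
`h` lies in `B^× · L_{h^N}`, with the classical ramification bound available in `B`. -/
theorem GradedField.good_set_add_closed {H : Type*} [CommGroup H] [DecidableEq H]
    {K : Type*} [CommRing K] (F : GradedField H K) (L : Subring K)
    (hL : F.IsGradedSubfield L) (R : Subring K) (hR : F.IsGradedValRing L R)
    -- `B` is a valuation ring of `K₁`
    (B : Subring K) (hB1 : B ≤ F.oneComponent)
    (hBval : ∀ x ∈ F.oneComponent, x ≠ 0 → x ∈ B ∨ Ring.inverse x ∈ B)
    -- containing `R₁`, with local inclusion
    (hRB : R ⊓ F.oneComponent ≤ B)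
    (hloc : ∀ x ∈ R ⊓ F.oneComponent, (∃ v ∈ B, x * v = 1) →
      ∃ v ∈ R ⊓ F.oneComponent, x * v = 1)
    (N : ℕ) (hN : 0 < N)
    -- `K_h = K₁ · L_h` for every `h`
    (hKh : ∀ (h : H), ∀ x ∈ F.comp h, ∃ c ∈ F.oneComponent, ∃ l ∈ L, l ∈ F.comp h ∧
      x = c * l)
    -- `x^N ∈ B^× · L_{h^N}` for homogeneous `x` of degree `h`
    (hpow : ∀ (h : H), ∀ x ∈ F.comp h, x ≠ 0 → ∃ u ∈ B, (∃ v ∈ B, u * v = 1) ∧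
      ∃ l ∈ L, l ∈ F.comp (h ^ N) ∧ x ^ N = u * l)
    -- classical ramification bound: `z^N ∈ B^× · R₁` for nonzero `z ∈ B`
    (hram : ∀ z ∈ B, z ≠ 0 → ∃ u ∈ B, (∃ v ∈ B, u * v = 1) ∧
      ∃ t ∈ R ⊓ F.oneComponent, z ^ N = u * t)
    (h : H) (x y : K) (hx : x ∈ F.comp h) (hy : y ∈ F.comp h) (hx0 : x ≠ 0) (hy0 : y ≠ 0)
    (hxy0 : x + y ≠ 0)
    -- `x/y ∈ B`
    (hdiv : x * Ring.inverse y ∈ B)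
    -- `x` and `y` lie in the good set
    (hxA : ∃ u ∈ B, (∃ v ∈ B, u * v = 1) ∧ ∃ r ∈ R, r ∈ F.comp (h ^ N) ∧ x ^ N = u * r)
    (hyA : ∃ u ∈ B, (∃ v ∈ B, u * v = 1) ∧ ∃ r ∈ R, r ∈ F.comp (h ^ N) ∧ y ^ N = u * r) :
    ∃ u ∈ B, (∃ v ∈ B, u * v = 1) ∧ ∃ r ∈ R, r ∈ F.comp (h ^ N) ∧
      (x + y) ^ N = u * r :=
  GradedField.good_set_add_closed_general F R B N hram h x y hy hy0 hxy0 hdiv hyA
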